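/- arXiv:0710.2033 — 2 statements merged into one kernel-verified Lean document; each statement's English description precedes it below -/
import Mathlib

section
/- Let φ and ψ be integrable functions on an interval (a,b) such that φ is decreasing and 0 ≤ ψ ≤ 1 on (a,b). Set γ = ∫_a^b ψ(t) dt. Then ∫_{b-γ}^b φ(t) dt ≤ ∫_a^b φ(t)ψ(t) dt ≤ ∫_a^{a+γ} φ(t) dt. -/
/-!
Write `φ = φψ + φ(1 - ψ)`. For the upper bound put `c = a + γ`: on `(a, c)` the weight `1 - ψ`
has the same total mass as `ψ` on `(c, b)`, and since `φ ≥ φ c` to the left of `c` and `φ ≤ φ c`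
to the right, `∫_c^b φψ ≤ φ c ∫_c^b ψ = φ c ∫_a^c (1 - ψ) ≤ ∫_a^c φ(1 - ψ)`. The lower bound is
the same comparison at `c = b - γ`, with the roles of `ψ` and `1 - ψ` exchanged.
-/

open MeasureTheory intervalIntegral Set

theorem AntitoneOn.integral_mul_right_le_integral_mul_left {φ u v : ℝ → ℝ} {a b c : ℝ}
    (hφ : AntitoneOn φ (Icc a b)) (hc : c ∈ Icc a b)
    (hu : ∀ t ∈ Ioo a c, 0 ≤ u t) (hv : ∀ t ∈ Ioo c b, 0 ≤ v t)
    (hu_int : IntervalIntegrable u volume a c) (hv_int : IntervalIntegrable v volume c b)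
    (hφu : IntervalIntegrable (fun t => φ t * u t) volume a c)
    (hφv : IntervalIntegrable (fun t => φ t * v t) volume c b)
    (hmass : ∫ t in a..c, u t = ∫ t in c..b, v t) :
    ∫ t in c..b, φ t * v t ≤ ∫ t in a..c, φ t * u t := by
  calc ∫ t in c..b, φ t * v t
      ≤ ∫ t in c..b, φ c * v t := by
        refine integral_mono_on_of_le_Ioo hc.2 hφv (hv_int.const_mul _) fun t ht => ?_
        exact mul_le_mul_of_nonneg_right
          (hφ hc ⟨hc.1.trans ht.1.le, ht.2.le⟩ ht.1.le) (hv t ht)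
    _ = ∫ t in a..c, φ c * u t := by
        rw [intervalIntegral.integral_const_mul, intervalIntegral.integral_const_mul, hmass]
    _ ≤ ∫ t in a..c, φ t * u t := by
        refine integral_mono_on_of_le_Ioo hc.1 (hu_int.const_mul _) hφu fun t ht => ?_
        exact mul_le_mul_of_nonneg_right
          (hφ ⟨ht.1.le, ht.2.le.trans hc.2⟩ hc ht.2.le) (hu t ht)

section Steffensen

variable {a b : ℝ} {φ ψ : ℝ → ℝ}

theorem integral_mem_Icc_of_forall_Ioo_mem_Icc (hab : a ≤ b)
    (hψ : IntervalIntegrable ψ volume a b) (hψ01 : ∀ t ∈ Ioo a b, ψ t ∈ Icc (0 : ℝ) 1) :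
    ∫ t in a..b, ψ t ∈ Icc 0 (b - a) := by
  constructor
  · simpa using integral_mono_on_of_le_Ioo hab intervalIntegrable_const hψ
      fun t ht => (hψ01 t ht).1
  · simpa using integral_mono_on_of_le_Ioo hab hψ intervalIntegrable_const
      fun t ht => (hψ01 t ht).2

theorem IntervalIntegrable.mul_one_sub (hφ : IntervalIntegrable φ volume a b)
    (hφψ : IntervalIntegrable (fun t => φ t * ψ t) volume a b) :
    IntervalIntegrable (fun t => φ t * (1 - ψ t)) volume a b := by
  convert hφ.sub hφψ using 1
  funext t
  ring

theorem integral_eq_integral_mul_add_integral_mul_one_sub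
    (hφ : IntervalIntegrable φ volume a b)
    (hφψ : IntervalIntegrable (fun t => φ t * ψ t) volume a b) :
    ∫ t in a..b, φ t = (∫ t in a..b, φ t * ψ t) + ∫ t in a..b, φ t * (1 - ψ t) := by
  rw [← integral_add hφψ (hφ.mul_one_sub hφψ)]
  simp only [mul_one_sub, add_sub_cancel]

theorem integral_one_sub (hψ : IntervalIntegrable ψ volume a b) :
    ∫ t in a..b, (1 - ψ t) = (b - a) - ∫ t in a..b, ψ t := by
  rw [integral_sub intervalIntegrable_const hψ, intervalIntegral.integral_const, smul_eq_mul,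
    mul_one]

theorem integral_mul_le_integral_of_antitoneOn (hab : a ≤ b)
    (hφ : IntervalIntegrable φ volume a b) (hψ : IntervalIntegrable ψ volume a b)
    (hφψ : IntervalIntegrable (fun t => φ t * ψ t) volume a b)
    (hmono : AntitoneOn φ (Icc a b)) (hψ01 : ∀ t ∈ Ioo a b, ψ t ∈ Icc (0 : ℝ) 1) :
    ∫ t in a..b, φ t * ψ t ≤ ∫ t in a..(a + ∫ t in a..b, ψ t), φ t := by
  obtain ⟨hγ0, hγ1⟩ := integral_mem_Icc_of_forall_Ioo_mem_Icc hab hψ hψ01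
  set γ := ∫ t in a..b, ψ t
  set c := a + γ
  have hc : c ∈ Icc a b := ⟨by linarith, by linarith⟩
  have hac : uIcc a c ⊆ uIcc a b := uIcc_subset_uIcc_left (Icc_subset_uIcc hc)
  have hcb : uIcc c b ⊆ uIcc a b := uIcc_subset_uIcc_right (Icc_subset_uIcc hc)
  have hmass : ∫ t in a..c, (1 - ψ t) = ∫ t in c..b, ψ t := by
    have hsplit := integral_add_adjacent_intervals (hψ.mono_set hac) (hψ.mono_set hcb)
    rw [integral_one_sub (hψ.mono_set hac)]
    linarith
  have hright := hmono.integral_mul_right_le_integral_mul_left hc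
    (fun t ht => sub_nonneg.2 (hψ01 t ⟨ht.1, ht.2.trans_le hc.2⟩).2)
    (fun t ht => (hψ01 t ⟨hc.1.trans_lt ht.1, ht.2⟩).1)
    (intervalIntegrable_const.sub (hψ.mono_set hac)) (hψ.mono_set hcb)
    ((hφ.mul_one_sub hφψ).mono_set hac) (hφψ.mono_set hcb) hmass
  rw [← integral_add_adjacent_intervals (hφψ.mono_set hac) (hφψ.mono_set hcb),
    integral_eq_integral_mul_add_integral_mul_one_sub (hφ.mono_set hac) (hφψ.mono_set hac)]
  linarith

theorem integral_le_integral_mul_of_antitoneOn (hab : a ≤ b)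
    (hφ : IntervalIntegrable φ volume a b) (hψ : IntervalIntegrable ψ volume a b)
    (hφψ : IntervalIntegrable (fun t => φ t * ψ t) volume a b)
    (hmono : AntitoneOn φ (Icc a b)) (hψ01 : ∀ t ∈ Ioo a b, ψ t ∈ Icc (0 : ℝ) 1) :
    ∫ t in (b - ∫ t in a..b, ψ t)..b, φ t ≤ ∫ t in a..b, φ t * ψ t := by
  obtain ⟨hγ0, hγ1⟩ := integral_mem_Icc_of_forall_Ioo_mem_Icc hab hψ hψ01
  set γ := ∫ t in a..b, ψ t
  set c := b - γ
  have hc : c ∈ Icc a b := ⟨by linarith, by linarith⟩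
  have hac : uIcc a c ⊆ uIcc a b := uIcc_subset_uIcc_left (Icc_subset_uIcc hc)
  have hcb : uIcc c b ⊆ uIcc a b := uIcc_subset_uIcc_right (Icc_subset_uIcc hc)
  have hmass : ∫ t in a..c, ψ t = ∫ t in c..b, (1 - ψ t) := by
    have hsplit := integral_add_adjacent_intervals (hψ.mono_set hac) (hψ.mono_set hcb)
    rw [integral_one_sub (hψ.mono_set hcb)]
    linarith
  have hright := hmono.integral_mul_right_le_integral_mul_left hc
    (fun t ht => (hψ01 t ⟨ht.1, ht.2.trans_le hc.2⟩).1)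
    (fun t ht => sub_nonneg.2 (hψ01 t ⟨hc.1.trans_lt ht.1, ht.2⟩).2)
    (hψ.mono_set hac) (intervalIntegrable_const.sub (hψ.mono_set hcb))
    (hφψ.mono_set hac) ((hφ.mul_one_sub hφψ).mono_set hcb) hmass
  rw [← integral_add_adjacent_intervals (hφψ.mono_set hac) (hφψ.mono_set hcb),
    integral_eq_integral_mul_add_integral_mul_one_sub (hφ.mono_set hcb) (hφψ.mono_set hcb)]
  linarith

end Steffensen

/-- Steffensen's inequality: if `φ` is decreasing and `0 ≤ ψ ≤ 1` are integrable on `(a,b)`,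
and `γ = ∫_a^b ψ`, then `∫_{b-γ}^b φ ≤ ∫_a^b φψ ≤ ∫_a^{a+γ} φ`. -/
theorem steffensen_inequality (a b : ℝ) (hab : a ≤ b) (φ ψ : ℝ → ℝ)
    (hφ : IntervalIntegrable φ volume a b)
    (hψ : IntervalIntegrable ψ volume a b)
    (hφψ : IntervalIntegrable (fun t => φ t * ψ t) volume a b)
    (hmono : AntitoneOn φ (Icc a b))
    (hψ01 : ∀ t ∈ Ioo a b, ψ t ∈ Icc (0 : ℝ) 1)
    (γ : ℝ) (hγ : γ = ∫ t in a..b, ψ t) :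
    (∫ t in (b - γ)..b, φ t) ≤ (∫ t in a..b, φ t * ψ t) ∧
      (∫ t in a..b, φ t * ψ t) ≤ ∫ t in a..(a + γ), φ t := by
  subst hγ
  exact ⟨integral_le_integral_mul_of_antitoneOn hab hφ hψ hφψ hmono hψ01,
    integral_mul_le_integral_of_antitoneOn hab hφ hψ hφψ hmono hψ01⟩
end

section
/- Let φ and ψ be integrable on (a,b) with φ decreasing and 0 ≤ ψ ≤ 1, and γ = ∫_a^b ψ(t) dt. Then ∫_a^b φ(t)ψ(t) dt ≤ ∫_a^{a+γ} φ(t) dt (the upper Steffensen inequality alone). -/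
open MeasureTheory intervalIntegral Set

/-! Cut `[a, b]` at `c`. On `[c, b]` we have `φ ≤ φ c`, so `∫_c^b φψ ≤ φ c ∫_c^b ψ`; on
`[a, c]` we have `φ c ≤ φ`, so `φ c ∫_a^c (1 - ψ) ≤ ∫_a^c φ (1 - ψ)`. Adding the two gives
`∫_a^b φψ ≤ ∫_a^c φ + φ c (γ - (c - a))`, and the error term vanishes for `c = a + γ`, which
lies in `[a, b]` because `0 ≤ ψ ≤ 1`. -/

theorem AntitoneOn.intervalIntegrable_mul {a b : ℝ} (hab : a ≤ b) {φ ψ : ℝ → ℝ}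
    (hφ : AntitoneOn φ (Icc a b)) (hψ : IntervalIntegrable ψ volume a b) :
    IntervalIntegrable (fun t => φ t * ψ t) volume a b := by
  rw [intervalIntegrable_iff_integrableOn_Ioc_of_le hab] at hψ ⊢
  have hφi : IntervalIntegrable φ volume a b :=
    AntitoneOn.intervalIntegrable (by rwa [uIcc_of_le hab])
  refine hψ.bdd_mul (c := max |φ b| |φ a|) hφi.1.aestronglyMeasurable
    (ae_restrict_of_forall_mem measurableSet_Ioc fun t ht => ?_)
  have ht' : t ∈ Icc a b := Ioc_subset_Icc_self ht
  exact abs_le_max_abs_abs (hφ ht' ⟨hab, le_rfl⟩ ht'.2) (hφ ⟨le_rfl, hab⟩ ht' ht'.1)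

theorem integral_mul_le_integral_mul_of_le {a b : ℝ} (hab : a ≤ b) {f g w : ℝ → ℝ}
    (hf : IntervalIntegrable (fun t => f t * w t) volume a b)
    (hg : IntervalIntegrable (fun t => g t * w t) volume a b)
    (hfg : ∀ t ∈ Ioo a b, f t ≤ g t) (hw : ∀ t ∈ Ioo a b, 0 ≤ w t) :
    ∫ t in a..b, f t * w t ≤ ∫ t in a..b, g t * w t :=
  integral_mono_on_of_le_Ioo hab hf hg fun t ht => mul_le_mul_of_nonneg_right (hfg t ht) (hw t ht)

theorem integral_mem_Icc_of_forall_mem_Icc_zero_one {a b : ℝ} (hab : a ≤ b) {ψ : ℝ → ℝ}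
    (hψ : IntervalIntegrable ψ volume a b) (hψ01 : ∀ t ∈ Ioo a b, ψ t ∈ Icc (0 : ℝ) 1) :
    ∫ t in a..b, ψ t ∈ Icc 0 (b - a) := by
  constructor
  · simpa using
      integral_mono_on_of_le_Ioo hab intervalIntegrable_const hψ fun t ht => (hψ01 t ht).1
  · simpa using
      integral_mono_on_of_le_Ioo hab hψ intervalIntegrable_const fun t ht => (hψ01 t ht).2

theorem integral_mul_le_integral_add_of_antitoneOn {a b c : ℝ} (hac : a ≤ c) (hcb : c ≤ b)
    {φ ψ : ℝ → ℝ} (hφ : AntitoneOn φ (Icc a b)) (hψ : IntervalIntegrable ψ volume a b)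
    (hψ01 : ∀ t ∈ Ioo a b, ψ t ∈ Icc (0 : ℝ) 1) :
    ∫ t in a..b, φ t * ψ t ≤ (∫ t in a..c, φ t) + φ c * ((∫ t in a..b, ψ t) - (c - a)) := by
  have hc : c ∈ Icc a b := ⟨hac, hcb⟩
  have hψ₁ := hψ.mono_set (uIcc_subset_uIcc_left (Icc_subset_uIcc hc))
  have hψ₂ := hψ.mono_set (uIcc_subset_uIcc_right (Icc_subset_uIcc hc))
  have hφ₁ : AntitoneOn φ (Icc a c) := hφ.mono (Icc_subset_Icc_right hcb)
  have hφ₂ : AntitoneOn φ (Icc c b) := hφ.mono (Icc_subset_Icc_left hac)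
  have hφi₁ : IntervalIntegrable φ volume a c :=
    AntitoneOn.intervalIntegrable (by rwa [uIcc_of_le hac])
  have hφψ₁ := hφ₁.intervalIntegrable_mul hac hψ₁
  have hφψ₂ := hφ₂.intervalIntegrable_mul hcb hψ₂
  have right : ∫ t in c..b, φ t * ψ t ≤ ∫ t in c..b, φ c * ψ t :=
    integral_mul_le_integral_mul_of_le hcb hφψ₂ (hψ₂.const_mul _)
      (fun t ht => hφ hc ⟨hac.trans ht.1.le, ht.2.le⟩ ht.1.le)
      (fun t ht => (hψ01 t ⟨hac.trans_lt ht.1, ht.2⟩).1)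
  have left : ∫ t in a..c, φ c * (1 - ψ t) ≤ ∫ t in a..c, φ t * (1 - ψ t) :=
    integral_mul_le_integral_mul_of_le hac ((intervalIntegrable_const.sub hψ₁).const_mul _)
      (by simpa only [mul_sub, mul_one] using hφi₁.sub hφψ₁)
      (fun t ht => hφ ⟨ht.1.le, ht.2.le.trans hcb⟩ hc ht.2.le)
      (fun t ht => sub_nonneg.2 (hψ01 t ⟨ht.1, ht.2.trans_le hcb⟩).2)
  rw [← integral_add_adjacent_intervals hψ₁ hψ₂,
    ← integral_add_adjacent_intervals hφψ₁ hφψ₂]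
  rw [intervalIntegral.integral_const_mul] at right
  rw [intervalIntegral.integral_const_mul, integral_sub intervalIntegrable_const hψ₁,
    intervalIntegral.integral_const, smul_eq_mul, mul_one] at left
  simp only [mul_sub, mul_one] at left
  rw [integral_sub hφi₁ hφψ₁] at left
  linarith

theorem steffensen_upper_general (a b : ℝ) (hab : a ≤ b) (φ ψ : ℝ → ℝ)
    (hψ : IntervalIntegrable ψ volume a b)
    (hmono : AntitoneOn φ (Icc a b))
    (hψ01 : ∀ t ∈ Ioo a b, ψ t ∈ Icc (0 : ℝ) 1)
    (γ : ℝ) (hγ : γ = ∫ t in a..b, ψ t) :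
    (∫ t in a..b, φ t * ψ t) ≤ ∫ t in a..(a + γ), φ t := by
  obtain ⟨hγ₀, hγ₁⟩ : γ ∈ Icc 0 (b - a) :=
    hγ ▸ integral_mem_Icc_of_forall_mem_Icc_zero_one hab hψ hψ01
  have h := integral_mul_le_integral_add_of_antitoneOn (c := a + γ) (by linarith) (by linarith)
    hmono hψ hψ01
  rwa [← hγ, add_sub_cancel_left, sub_self, mul_zero, add_zero] at h

/-- Steffensen's inequality: if `φ` is decreasing and `0 ≤ ψ ≤ 1` are integrable on `(a,b)`,
and `γ = ∫_a^b ψ`, then `∫_{b-γ}^b φ ≤ ∫_a^b φψ ≤ ∫_a^{a+γ} φ`. -/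
theorem steffensen_upper (a b : ℝ) (hab : a ≤ b) (φ ψ : ℝ → ℝ)
    (hφ : IntervalIntegrable φ volume a b)
    (hψ : IntervalIntegrable ψ volume a b)
    (hφψ : IntervalIntegrable (fun t => φ t * ψ t) volume a b)
    (hmono : AntitoneOn φ (Icc a b))
    (hψ01 : ∀ t ∈ Ioo a b, ψ t ∈ Icc (0 : ℝ) 1)
    (γ : ℝ) (hγ : γ = ∫ t in a..b, ψ t) :
    (∫ t in a..b, φ t * ψ t) ≤ ∫ t in a..(a + γ), φ t :=
  steffensen_upper_general a b hab φ ψ hψ hmono hψ01 γ hγ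
end
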